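/- On H × R_{>0}, the fundamental 2-form Ω_{a,b} = (1/a²) dx∧dy + (1/b²) ω∧dr (with ω = dt + 2x dy - 2y dx and a = a(r), b = b(r) positive smooth functions) is closed if and only if da/dr = 2a³/b². -/

import Mathlib

/-- Points (x, y, t, r) of H × ℝ_{>0}. -/
abbrev E4 : Type := ℝ × ℝ × ℝ × ℝ

def rc (p : E4) : ℝ := p.2.2.2

/-- ω = dt + 2x dy - 2y dx evaluated at p on u. -/
def omg (p u : E4) : ℝ := u.2.2.1 + 2 * p.1 * u.2.1 - 2 * p.2.1 * u.1

/-- The 2-form Ω_{a,b} = a⁻² dx∧dy + b⁻² ω∧dr. -/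
noncomputable def OmAB (a b : ℝ → ℝ) (p u v : E4) : ℝ :=
  (1 / (a (rc p)) ^ 2) * (u.1 * v.2.1 - u.2.1 * v.1) +
    (1 / (b (rc p)) ^ 2) * (omg p u * v.2.2.2 - omg p v * u.2.2.2)

/-- Exterior derivative of Ω_{a,b} on constant vectors u, v, w. -/
noncomputable def dOmAB (a b : ℝ → ℝ) (p u v w : E4) : ℝ :=
  fderiv ℝ (fun q => OmAB a b q v w) p u -
    fderiv ℝ (fun q => OmAB a b q u w) p v +
    fderiv ℝ (fun q => OmAB a b q u v) p w

/-!
Writing Ω = f(r) dx∧dy + g(r) ω∧dr with f = a⁻², g = b⁻², one has dω = 4 dx∧dy, so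
dΩ = f'(r) dr∧dx∧dy + g'(r) dr∧ω∧dr + g(r) dω∧dr = (f'(r) + 4 g(r)) dr∧dx∧dy.
Hence Ω is closed exactly when -2a'/a³ + 4/b² vanishes, i.e. when a' = 2a³/b².
-/

-- The invariant formula for `dF`; on constant vector fields its Lie bracket terms vanish.
noncomputable def extDerivTwoForm {E : Type*} [NormedAddCommGroup E] [NormedSpace ℝ E]
    (F : E → E → E → ℝ) (p u v w : E) : ℝ :=
  fderiv ℝ (fun q => F q v w) p u - fderiv ℝ (fun q => F q u w) p v +
    fderiv ℝ (fun q => F q u v) p w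

def dxWedgeDy (u v : E4) : ℝ := u.1 * v.2.1 - u.2.1 * v.1

def omgWedgeDr (p u v : E4) : ℝ := omg p u * rc v - omg p v * rc u

def drWedgeDxWedgeDy (u v w : E4) : ℝ :=
  rc u * dxWedgeDy v w - rc v * dxWedgeDy u w + rc w * dxWedgeDy u v

noncomputable def radialForm (f g : ℝ → ℝ) (p u v : E4) : ℝ :=
  f (rc p) * dxWedgeDy u v + g (rc p) * omgWedgeDr p u v

theorem OmAB_eq_radialForm (a b : ℝ → ℝ) :
    OmAB a b = radialForm (fun s => 1 / a s ^ 2) (fun s => 1 / b s ^ 2) := rfl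

def coordX : E4 →L[ℝ] ℝ := ContinuousLinearMap.fst ℝ ℝ (ℝ × ℝ × ℝ)

def coordY : E4 →L[ℝ] ℝ :=
  (ContinuousLinearMap.fst ℝ ℝ (ℝ × ℝ)).comp (ContinuousLinearMap.snd ℝ ℝ (ℝ × ℝ × ℝ))

def coordR : E4 →L[ℝ] ℝ :=
  (ContinuousLinearMap.snd ℝ ℝ ℝ).comp
    ((ContinuousLinearMap.snd ℝ ℝ (ℝ × ℝ)).comp (ContinuousLinearMap.snd ℝ ℝ (ℝ × ℝ × ℝ)))

theorem hasFDerivAt_omg (p v : E4) :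
    HasFDerivAt (fun q => omg q v) ((2 * v.2.1) • coordX - (2 * v.1) • coordY) p := by
  have hx : HasFDerivAt (fun q : E4 => q.1) coordX p := coordX.hasFDerivAt
  have hy : HasFDerivAt (fun q : E4 => q.2.1) coordY p := coordY.hasFDerivAt
  have h := ((hx.const_mul (2 * v.2.1)).sub (hy.const_mul (2 * v.1))).add_const v.2.2.1
  refine h.congr_of_eventuallyEq (Filter.Eventually.of_forall fun q => ?_)
  simp only [omg, Pi.sub_apply]
  ring

theorem fderiv_radialForm {f g : ℝ → ℝ} {f' g' : ℝ} {p : E4} (hf : HasDerivAt f f' (rc p))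
    (hg : HasDerivAt g g' (rc p)) (u v w : E4) :
    fderiv ℝ (fun q => radialForm f g q v w) p u =
      f' * rc u * dxWedgeDy v w + g' * rc u * omgWedgeDr p v w +
        g (rc p) * (2 * dxWedgeDy u v * rc w - 2 * dxWedgeDy u w * rc v) := by
  have hr : HasFDerivAt rc coordR p := coordR.hasFDerivAt
  have hfr := hf.comp_hasFDerivAt p hr
  have hgr := hg.comp_hasFDerivAt p hr
  have hΩ := (hfr.mul_const (dxWedgeDy v w)).add
    (hgr.mul (((hasFDerivAt_omg p v).mul_const (rc w)).sub
      ((hasFDerivAt_omg p w).mul_const (rc v))))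
  rw [HasFDerivAt.fderiv (f := fun q => radialForm f g q v w) hΩ]
  simp only [coordX, coordY, coordR, add_apply, sub_apply,
    smul_apply, ContinuousLinearMap.comp_apply, ContinuousLinearMap.coe_fst',
    ContinuousLinearMap.coe_snd', Function.comp_apply, Pi.sub_apply, smul_eq_mul, omgWedgeDr,
    dxWedgeDy, rc]
  ring

theorem extDerivTwoForm_radialForm {f g : ℝ → ℝ} {f' g' : ℝ} {p : E4}
    (hf : HasDerivAt f f' (rc p)) (hg : HasDerivAt g g' (rc p)) (u v w : E4) :
    extDerivTwoForm (radialForm f g) p u v w =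
      (f' + 4 * g (rc p)) * drWedgeDxWedgeDy u v w := by
  simp only [extDerivTwoForm, fderiv_radialForm hf hg, omgWedgeDr, drWedgeDxWedgeDy,
    dxWedgeDy, omg]
  ring

theorem HasDerivAt.one_div_sq {a : ℝ → ℝ} {a' r : ℝ} (ha : HasDerivAt a a' r) (h0 : a r ≠ 0) :
    HasDerivAt (fun s => 1 / a s ^ 2) (-2 * a' / a r ^ 3) r := by
  refine (((ha.pow 2).inv (pow_ne_zero 2 h0)).congr_of_eventuallyEq
    (Filter.Eventually.of_forall fun s => one_div _)).congr_deriv ?_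
  simp only [Pi.pow_apply]
  field_simp
  ring

theorem dOmAB_eq {a b : ℝ → ℝ} {p : E4} (ha : DifferentiableAt ℝ a (rc p))
    (hb : DifferentiableAt ℝ b (rc p)) (ha0 : a (rc p) ≠ 0) (hb0 : b (rc p) ≠ 0)
    (u v w : E4) :
    dOmAB a b p u v w =
      (-2 * deriv a (rc p) / a (rc p) ^ 3 + 4 / b (rc p) ^ 2) * drWedgeDxWedgeDy u v w := by
  have h := extDerivTwoForm_radialForm (ha.hasDerivAt.one_div_sq ha0)
    (hb.hasDerivAt.one_div_sq hb0) u v w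
  rw [← OmAB_eq_radialForm] at h
  rw [dOmAB, ← extDerivTwoForm, h, mul_one_div]

theorem neg_two_mul_div_cube_add_four_div_sq_eq_zero_iff {a a' b : ℝ} (ha : a ≠ 0) (hb : b ≠ 0) :
    -2 * a' / a ^ 3 + 4 / b ^ 2 = 0 ↔ a' = 2 * a ^ 3 / b ^ 2 := by
  rw [eq_div_iff (pow_ne_zero 2 hb), div_add_div _ _ (pow_ne_zero 3 ha) (pow_ne_zero 2 hb),
    div_eq_zero_iff, or_iff_left (mul_ne_zero (pow_ne_zero 3 ha) (pow_ne_zero 2 hb))]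
  constructor <;> intro h <;> linarith

/-- Ω_{a,b} is closed (on H × ℝ_{>0}) if and only if da/dr = 2a³/b². -/
theorem OmAB_closed_iff (a b : ℝ → ℝ)
    (ha : Differentiable ℝ a) (hb : Differentiable ℝ b)
    (hapos : ∀ r : ℝ, 0 < r → 0 < a r) (hbpos : ∀ r : ℝ, 0 < r → 0 < b r) :
    (∀ (p u v w : E4), 0 < rc p → dOmAB a b p u v w = 0) ↔
      (∀ r : ℝ, 0 < r → deriv a r = 2 * (a r) ^ 3 / (b r) ^ 2) := by
  have hdΩ : ∀ p u v w : E4, 0 < rc p → dOmAB a b p u v w =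
      (-2 * deriv a (rc p) / a (rc p) ^ 3 + 4 / b (rc p) ^ 2) * drWedgeDxWedgeDy u v w :=
    fun p u v w hp => dOmAB_eq (ha _) (hb _) (hapos _ hp).ne' (hbpos _ hp).ne' u v w
  constructor
  · intro hclosed r hr
    have h := hclosed (0, 0, 0, r) (0, 0, 0, 1) (1, 0, 0, 0) (0, 1, 0, 0) hr
    have hvol : drWedgeDxWedgeDy (0, 0, 0, 1) (1, 0, 0, 0) (0, 1, 0, 0) = 1 := by
      norm_num [drWedgeDxWedgeDy, dxWedgeDy, rc]
    rw [hdΩ (0, 0, 0, r) _ _ _ hr, hvol, mul_one] at h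
    exact (neg_two_mul_div_cube_add_four_div_sq_eq_zero_iff (hapos r hr).ne' (hbpos r hr).ne').1 h
  · intro hode p u v w hp
    rw [hdΩ p u v w hp, (neg_two_mul_div_cube_add_four_div_sq_eq_zero_iff (hapos _ hp).ne'
      (hbpos _ hp).ne').2 (hode _ hp), zero_mul]
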